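/- arXiv:2509.14338 — 4 statements merged into one kernel-verified Lean document; each statement's English description precedes it below -/
import Mathlib

section
/- Truncation lemma (Lemma on bounding the error made by finite truncations): Let ψ ∈ H with ‖ψ‖ ≤ 1 and suppose that for every finite set F ⊆ ι, ∑_{i ∈ F} E i · |⟪e i, ψ⟫|² ≤ E₀. For Δ > 0 let ψ_Δ denote the orthogonal projection of ψ onto the closed linear span of {e i | E i ≤ Δ}. Then for every bounded operator S on H, |⟪ψ_Δ, S ψ_Δ⟫ − ⟪ψ, S ψ⟫| ≤ 2 · ‖S‖ · √(E₀ / Δ). -/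
open scoped InnerProductSpace BigOperators

/-- Truncation lemma: if `ψ` has norm at most one and uniformly bounded energy
`E₀` (in the sense that all finite partial energy-weighted sums of its squared
coefficients in the Hilbert basis `e` are at most `E₀`), then for `Δ > 0` the
orthogonal projection `ψΔ` of `ψ` onto the closed span of the basis vectors of
energy at most `Δ` satisfies
`|⟪ψΔ, S ψΔ⟫ - ⟪ψ, S ψ⟫| ≤ 2 ‖S‖ √(E₀ / Δ)` for every bounded operator `S`. -/
theorem truncation_error_bound {ι : Type*} {H : Type*} [NormedAddCommGroup H]
    [InnerProductSpace ℂ H] [CompleteSpace H] (e : HilbertBasis ι ℂ H)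
    (E : ι → ℝ) (hE : ∀ i, 0 ≤ E i) (E₀ : ℝ) (hE₀ : 0 ≤ E₀)
    (ψ : H) (hψ : ‖ψ‖ ≤ 1)
    (henergy : ∀ F : Finset ι, ∑ i ∈ F, E i * ‖⟪e i, ψ⟫_ℂ‖ ^ 2 ≤ E₀)
    (Δ : ℝ) (hΔ : 0 < Δ) (S : H →L[ℂ] H) :
    letI K₀ : Submodule ℂ H := Submodule.span ℂ (e '' {i : ι | E i ≤ Δ})
    letI : CompleteSpace K₀.topologicalClosure :=
      K₀.isClosed_topologicalClosure.completeSpace_coe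
    ∀ ψΔ : H, ψΔ = (Submodule.orthogonalProjection K₀.topologicalClosure ψ : H) →
      ‖⟪ψΔ, S ψΔ⟫_ℂ - ⟪ψ, S ψ⟫_ℂ‖ ≤ 2 * ‖S‖ * Real.sqrt (E₀ / Δ) := by
  intro ψΔ hψΔ
  set K₀ : Submodule ℂ H := Submodule.span ℂ (e '' {i : ι | E i ≤ Δ}) with hK₀
  set K := K₀.topologicalClosure with hK
  set φ : H := ψ - ψΔ with hφ
  have hψΔ_mem : ψΔ ∈ K := by
    rw [hψΔ]; exact (Submodule.orthogonalProjection K ψ).2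
  have hφ_orth : φ ∈ Kᗮ := by
    rw [hφ, hψΔ]; exact K.sub_starProjection_mem_orthogonal ψ
  have hcoef : ∀ i, ⟪e i, φ⟫_ℂ = 0 ∨ ⟪e i, φ⟫_ℂ = ⟪e i, ψ⟫_ℂ ∧ Δ < E i := by
    intro i
    by_cases hi : E i ≤ Δ
    · left
      have hmem : e i ∈ K := K₀.le_topologicalClosure
        (Submodule.subset_span ⟨i, hi, rfl⟩)
      exact Submodule.inner_right_of_mem_orthogonal hmem hφ_orth
    · right
      refine ⟨?_, lt_of_not_ge hi⟩
      have hei : e i ∈ K₀ᗮ := by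
        have h1 : Submodule.span ℂ ({e i} : Set H) ⟂ K₀ := by
          rw [Submodule.isOrtho_span]
          rintro u hu v ⟨j, hj, rfl⟩
          rcases hu with rfl
          rw [← e.repr.inner_map_map]
          have hij : i ≠ j := fun h => hi (h ▸ hj)
          simp [HilbertBasis.repr_self, lp.inner_single_left, lp.single_apply, hij]
          exact e.orthonormal.2 hij
        exact h1 (Submodule.mem_span_singleton_self _)
      have hψΔ0 : ⟪e i, ψΔ⟫_ℂ = 0 := by
        have hm : ψΔ ∈ K₀ᗮᗮ := by
          rw [Submodule.orthogonal_orthogonal_eq_closure]; exact hψΔ_mem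
        exact Submodule.inner_right_of_mem_orthogonal hei hm
      rw [hφ, inner_sub_right, hψΔ0, sub_zero]
  have hφnorm_sq : ‖φ‖ ^ 2 ≤ E₀ / Δ := by
    have hsum : HasSum (fun i => ⟪φ, e i⟫_ℂ * ⟪e i, φ⟫_ℂ) ⟪φ, φ⟫_ℂ :=
      e.hasSum_inner_mul_inner φ φ
    have hre : HasSum (fun i => ‖⟪e i, φ⟫_ℂ‖ ^ 2) (‖φ‖ ^ 2) := by
      have h2 := hsum.mapL Complex.reCLM
      convert h2 using 1
      · funext i
        rw [Complex.reCLM_apply, ← inner_conj_symm φ (e i), mul_comm, Complex.mul_conj]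
        simp [Complex.sq_norm]
      · simp [← @inner_self_eq_norm_sq ℂ]
    refine le_of_tendsto hre (Filter.Eventually.of_forall fun F => ?_)
    calc ∑ i ∈ F, ‖⟪e i, φ⟫_ℂ‖ ^ 2
        ≤ ∑ i ∈ F, E i / Δ * ‖⟪e i, ψ⟫_ℂ‖ ^ 2 := by
          refine Finset.sum_le_sum fun i _ => ?_
          rcases hcoef i with h0 | ⟨hq, hlt⟩
          · rw [h0]
            simp only [norm_zero]
            rw [zero_pow (by norm_num)]
            exact mul_nonneg (div_nonneg (hE i) hΔ.le) (sq_nonneg _)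
          · rw [hq]
            have h1 : (1 : ℝ) ≤ E i / Δ := (one_le_div hΔ).2 hlt.le
            nlinarith [sq_nonneg ‖⟪e i, ψ⟫_ℂ‖]
      _ = (∑ i ∈ F, E i * ‖⟪e i, ψ⟫_ℂ‖ ^ 2) / Δ := by
          rw [Finset.sum_div]
          exact Finset.sum_congr rfl fun i _ => by ring
      _ ≤ E₀ / Δ := by gcongr; exact henergy F
  have hφnorm : ‖φ‖ ≤ Real.sqrt (E₀ / Δ) :=
    (Real.le_sqrt (norm_nonneg _) (div_nonneg hE₀ hΔ.le)).2 hφnorm_sq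
  have hψΔnorm : ‖ψΔ‖ ≤ 1 := by
    rw [hψΔ]
    calc ‖(Submodule.orthogonalProjection K ψ : H)‖ ≤ ‖ψ‖ := by
          simpa using (Submodule.orthogonalProjection K).le_of_opNorm_le
            (Submodule.orthogonalProjectionOnto_norm_le K) ψ
      _ ≤ 1 := hψ
  have key : ⟪ψΔ, S ψΔ⟫_ℂ - ⟪ψ, S ψ⟫_ℂ
      = ⟪ψΔ - ψ, S ψΔ⟫_ℂ + ⟪ψ, S ψΔ - S ψ⟫_ℂ := by
    rw [inner_sub_left, inner_sub_right]; ring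
  rw [key]
  have hSsub : S ψΔ - S ψ = S (ψΔ - ψ) := (map_sub S ψΔ ψ).symm
  have hsub : ‖ψΔ - ψ‖ = ‖φ‖ := by rw [hφ, norm_sub_rev]
  calc ‖⟪ψΔ - ψ, S ψΔ⟫_ℂ + ⟪ψ, S ψΔ - S ψ⟫_ℂ‖
      ≤ ‖⟪ψΔ - ψ, S ψΔ⟫_ℂ‖ + ‖⟪ψ, S ψΔ - S ψ⟫_ℂ‖ := norm_add_le _ _
    _ ≤ ‖ψΔ - ψ‖ * ‖S ψΔ‖ + ‖ψ‖ * ‖S ψΔ - S ψ‖ :=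
        add_le_add (norm_inner_le_norm _ _) (norm_inner_le_norm _ _)
    _ ≤ ‖φ‖ * (‖S‖ * 1) + 1 * (‖S‖ * ‖φ‖) := by
        refine add_le_add ?_ ?_
        · rw [hsub]
          exact mul_le_mul_of_nonneg_left
            ((S.le_opNorm ψΔ).trans (by nlinarith [norm_nonneg S])) (norm_nonneg _)
        · rw [hSsub]
          refine mul_le_mul hψ ((S.le_opNorm _).trans ?_) (norm_nonneg _) zero_le_one
          rw [hsub]
    _ = 2 * ‖S‖ * ‖φ‖ := by ring
    _ ≤ 2 * ‖S‖ * Real.sqrt (E₀ / Δ) :=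
        mul_le_mul_of_nonneg_left hφnorm (by positivity)
end

section
/- Norm compactness of the bounded-energy set: The set K = {ψ ∈ H | ‖ψ‖ ≤ 1 and for every finite set F ⊆ ι, ∑_{i ∈ F} E i · |⟪e i, ψ⟫|² ≤ E₀} is compact in the norm topology of H. -/
open scoped InnerProductSpace BigOperators

/-- Parseval: the squared norms of the coefficients of `φ` in a Hilbert basis
sum to the squared norm of `φ`. -/
lemma hilbertBasis_parseval {ι : Type*} {H : Type*}
    [NormedAddCommGroup H] [InnerProductSpace ℂ H] [CompleteSpace H]
    (e : HilbertBasis ι ℂ H) (φ : H) :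
    HasSum (fun i => ‖⟪e i, φ⟫_ℂ‖ ^ 2) (‖φ‖ ^ 2) := by
  have h := e.hasSum_inner_mul_inner φ φ
  have h2 := (Complex.reCLM : ℂ →L[ℝ] ℝ).hasSum h
  convert h2 using 2 with i
  · rw [← inner_conj_symm φ (e i), RCLike.conj_mul]
    simp [← Complex.ofReal_pow]
  · rw [← inner_self_eq_norm_sq (𝕜 := ℂ) φ, RCLike.re_to_complex]
    rfl

/-- Norm compactness of the bounded-energy set: in a Hilbert space with Hilbert
basis `e` and an energy function `E` with finite sublevel sets, the set of
vectors of norm at most one whose finite energy-weighted partial sums of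
squared coefficients are all bounded by `E₀` is compact in the norm topology. -/
theorem boundedEnergySet_isCompact {ι : Type*} {H : Type*}
    [NormedAddCommGroup H] [InnerProductSpace ℂ H] [CompleteSpace H]
    (e : HilbertBasis ι ℂ H) (E : ι → ℝ) (hE : ∀ i, 0 ≤ E i)
    (hsub : ∀ Δ : ℝ, {i : ι | E i ≤ Δ}.Finite) (E₀ : ℝ) (hE₀ : 0 ≤ E₀) :
    IsCompact {ψ : H | ‖ψ‖ ≤ 1 ∧
      ∀ F : Finset ι, ∑ i ∈ F, E i * ‖⟪e i, ψ⟫_ℂ‖ ^ 2 ≤ E₀} := by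
  classical
  set K : Set H := {ψ : H | ‖ψ‖ ≤ 1 ∧
      ∀ F : Finset ι, ∑ i ∈ F, E i * ‖⟪e i, ψ⟫_ℂ‖ ^ 2 ≤ E₀} with hKdef
  have hclosed : IsClosed K := by
    have h1 : IsClosed {ψ : H | ‖ψ‖ ≤ 1} :=
      isClosed_le continuous_norm continuous_const
    have h2 : ∀ F : Finset ι,
        IsClosed {ψ : H | ∑ i ∈ F, E i * ‖⟪e i, ψ⟫_ℂ‖ ^ 2 ≤ E₀} := by
      intro F
      apply isClosed_le _ continuous_const
      apply continuous_finset_sum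
      intro i _
      exact continuous_const.mul (((innerSL ℂ (e i)).continuous.norm).pow 2)
    have : K = {ψ : H | ‖ψ‖ ≤ 1} ∩
        ⋂ F : Finset ι, {ψ : H | ∑ i ∈ F, E i * ‖⟪e i, ψ⟫_ℂ‖ ^ 2 ≤ E₀} := by
      ext ψ; simp [hKdef, Set.mem_iInter]
    rw [this]
    exact h1.inter (isClosed_iInter h2)
  apply TotallyBounded.isCompact_of_isClosed _ hclosed
  rw [Metric.totallyBounded_iff]
  intro ε hε
  -- choose the energy cutoff
  set Δ : ℝ := (E₀ + 1) / (ε / 2) ^ 2 with hΔdef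
  have hΔpos : 0 < Δ := by positivity
  have hΔ : E₀ ≤ Δ * (ε / 2) ^ 2 := by
    rw [hΔdef, div_mul_cancel₀]
    · linarith
    · positivity
  set F : Finset ι := (hsub Δ).toFinset with hFdef
  have hFmem : ∀ i : ι, i ∈ F ↔ E i ≤ Δ := by
    intro i; rw [hFdef, Set.Finite.mem_toFinset]; rfl
  -- truncation map
  set T : H → H := fun ψ => ∑ i ∈ F, ⟪e i, ψ⟫_ℂ • e i with hTdef
  have hcoefT : ∀ ψ : H, ∀ j : ι,
      ⟪e j, T ψ⟫_ℂ = if j ∈ F then ⟪e j, ψ⟫_ℂ else 0 := by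
    intro ψ j
    by_cases hj : j ∈ F
    · rw [if_pos hj, hTdef]
      exact e.orthonormal.inner_right_sum _ hj
    · rw [if_neg hj, hTdef]
      simp only [inner_sum, inner_smul_right]
      apply Finset.sum_eq_zero
      intro i hi
      rw [orthonormal_iff_ite.mp e.orthonormal j i, if_neg, mul_zero]
      rintro rfl; exact hj hi
  -- key estimates
  have key : ∀ ψ ∈ K, ‖ψ - T ψ‖ ≤ ε / 2 ∧ ‖T ψ‖ ≤ 1 := by
    rintro ψ ⟨hψ1, hψ2⟩
    set a : ι → ℂ := fun i => ⟪e i, ψ⟫_ℂ with hadef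
    have hsum_a := hilbertBasis_parseval e ψ
    -- coefficients of ψ - T ψ
    have hcoefφ : (fun j => ‖⟪e j, ψ - T ψ⟫_ℂ‖ ^ 2)
        = fun j => if j ∈ F then 0 else ‖a j‖ ^ 2 := by
      funext j
      rw [inner_sub_right, hcoefT ψ j]
      by_cases hj : j ∈ F <;> simp [hj, hadef]
    have hsum_phi := hilbertBasis_parseval e (ψ - T ψ)
    rw [hcoefφ] at hsum_phi
    -- energy sum
    have hEsum : Summable (fun i => E i * ‖a i‖ ^ 2) :=
      summable_of_sum_le (fun i => mul_nonneg (hE i) (by positivity)) hψ2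
    have hEle : ∑' i, E i * ‖a i‖ ^ 2 ≤ E₀ := Summable.tsum_le_of_sum_le hEsum hψ2
    -- tail estimate
    have htail : Δ * ‖ψ - T ψ‖ ^ 2 ≤ E₀ := by
      have hmul := hsum_phi.mul_left Δ
      have hle : Δ * ‖ψ - T ψ‖ ^ 2 ≤ ∑' i, E i * ‖a i‖ ^ 2 := by
        refine hasSum_le (fun j => ?_) hmul hEsum.hasSum
        by_cases hj : j ∈ F
        · simp only [hj, if_true, mul_zero]
          exact mul_nonneg (hE j) (by positivity)
        · simp only [hj, if_false]
          have : Δ ≤ E j := le_of_not_ge ((hFmem j).not.mp hj)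
          exact mul_le_mul_of_nonneg_right this (by positivity)
      linarith
    constructor
    · -- ‖ψ - T ψ‖ ≤ ε / 2
      have h1 : ‖ψ - T ψ‖ ^ 2 ≤ (ε / 2) ^ 2 := by
        have := (mul_le_mul_iff_of_pos_left hΔpos).mpr (le_refl (‖ψ - T ψ‖ ^ 2))
        nlinarith
      nlinarith [norm_nonneg (ψ - T ψ)]
    · -- ‖T ψ‖ ≤ 1
      have hcT : (fun j => ‖⟪e j, T ψ⟫_ℂ‖ ^ 2)
          = fun j => if j ∈ F then ‖a j‖ ^ 2 else 0 := by
        funext j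
        rw [hcoefT ψ j]
        by_cases hj : j ∈ F <;> simp [hj, hadef]
      have hsum_T := hilbertBasis_parseval e (T ψ)
      rw [hcT] at hsum_T
      have hfin : HasSum (fun j => if j ∈ F then ‖a j‖ ^ 2 else 0)
          (∑ j ∈ F, if j ∈ F then ‖a j‖ ^ 2 else 0) := by
        apply hasSum_sum_of_ne_finset_zero
        intro j hj; rw [if_neg hj]
      have hTeq : ‖T ψ‖ ^ 2 = ∑ j ∈ F, ‖a j‖ ^ 2 := by
        rw [hsum_T.unique hfin]
        exact Finset.sum_congr rfl fun j hj => by rw [if_pos hj]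
      have hbessel : ∑ j ∈ F, ‖a j‖ ^ 2 ≤ ‖ψ‖ ^ 2 :=
        sum_le_hasSum F (fun j _ => by positivity) hsum_a
      nlinarith [norm_nonneg (T ψ), norm_nonneg ψ]
  -- finite-dimensional target
  set S : Submodule ℂ H := Submodule.span ℂ (e '' ↑F) with hSdef
  have hSfin : FiniteDimensional ℂ S :=
    FiniteDimensional.span_of_finite ℂ ((F.finite_toSet).image e)
  have hC : IsCompact ((Subtype.val : S → H) '' Metric.closedBall 0 1) :=
    (isCompact_closedBall (0 : S) 1).image continuous_subtype_val
  obtain ⟨t, htfin, htcover⟩ :=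
    (Metric.totallyBounded_iff.mp hC.totallyBounded) (ε / 2) (by positivity)
  refine ⟨t, htfin, fun ψ hψ => ?_⟩
  obtain ⟨htail, hTnorm⟩ := key ψ hψ
  have hTmem : T ψ ∈ S := by
    apply Submodule.sum_mem
    intro i hi
    exact Submodule.smul_mem _ _ (Submodule.subset_span ⟨i, hi, rfl⟩)
  have hTC : T ψ ∈ (Subtype.val : S → H) '' Metric.closedBall 0 1 := by
    refine ⟨⟨T ψ, hTmem⟩, ?_, rfl⟩
    rw [Metric.mem_closedBall, dist_zero_right]
    exact hTnorm
  obtain ⟨y, hy⟩ := Set.mem_iUnion₂.mp (htcover hTC)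
  obtain ⟨hyt, hyb⟩ := hy
  refine Set.mem_iUnion₂.mpr ⟨y, hyt, ?_⟩
  rw [Metric.mem_ball] at hyb ⊢
  calc dist ψ y ≤ dist ψ (T ψ) + dist (T ψ) y := dist_triangle _ _ _
    _ < ε / 2 + ε / 2 := by
        rw [dist_eq_norm]
        exact add_lt_add_of_le_of_lt htail hyb
    _ = ε := by ring
end

section
/- Tightness upgrades componentwise convergence to norm convergence: Let (ψ_N)_{N ∈ ℕ} be a sequence of vectors in H with ‖ψ_N‖ ≤ 1 for all N, satisfying the uniform energy bound: for every N and every finite set F ⊆ ι, ∑_{i ∈ F} E i · |⟪e i, ψ_N⟫|² ≤ E₀. If there is c : ι → ℂ such that ⟪e i, ψ_N⟫ → c i as N → ∞ for every i ∈ ι, then there exists ψ ∈ H with ⟪e i, ψ⟫ = c i for all i, and ‖ψ_N − ψ‖ → 0 as N → ∞. -/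
open Filter
open scoped InnerProductSpace BigOperators ENNReal

private lemma rpow_two_eq {x : ℝ} (hx : 0 ≤ x) :
    x ^ ((2 : ℝ≥0∞).toReal) = x ^ 2 := by
  rw [show ((2 : ℝ≥0∞).toReal) = ((2 : ℕ) : ℝ) by norm_num, Real.rpow_natCast]

private lemma tail_bound {ι : Type*} [DecidableEq ι] (E : ι → ℝ) (E₀ Δ : ℝ) (hΔ : 0 < Δ)
    (F : Finset ι) (hF : ∀ i, i ∉ F → Δ ≤ E i)
    (x : ι → ℂ) (hx : Summable fun i => ‖x i‖ ^ 2)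
    (hxE : ∀ G : Finset ι, ∑ i ∈ G, E i * ‖x i‖ ^ 2 ≤ E₀) :
    ∑' i : ((↑F : Set ι)ᶜ : Set ι), ‖x (i : ι)‖ ^ 2 ≤ E₀ / Δ := by
  apply Summable.tsum_le_of_sum_le (hx.subtype _)
  intro s
  rw [le_div_iff₀ hΔ]
  calc (∑ i ∈ s, ‖x i.1‖ ^ 2) * Δ = ∑ i ∈ s, Δ * ‖x i.1‖ ^ 2 := by
        rw [Finset.sum_mul]; exact Finset.sum_congr rfl fun i _ => mul_comm _ _
    _ ≤ ∑ i ∈ s, E i.1 * ‖x i.1‖ ^ 2 := by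
        refine Finset.sum_le_sum fun i _ => mul_le_mul_of_nonneg_right ?_ (sq_nonneg _)
        exact hF i.1 fun h => i.2 (Finset.mem_coe.mpr h)
    _ ≤ E₀ := by
        have h := hxE (s.image Subtype.val)
        rw [Finset.sum_image (fun a _ b _ h => Subtype.val_injective h)] at h
        exact h

/-- Tightness upgrades componentwise convergence to norm convergence: a
sequence of vectors of norm at most one with a uniform energy bound (with
respect to an energy function with finite sublevel sets) whose coefficients in
the Hilbert basis converge pointwise actually converges in norm to the vector
with the limiting coefficients. -/
theorem tightness_norm_convergence {ι : Type*} {H : Type*}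
    [NormedAddCommGroup H] [InnerProductSpace ℂ H] [CompleteSpace H]
    (e : HilbertBasis ι ℂ H) (E : ι → ℝ) (hE : ∀ i, 0 ≤ E i)
    (hsub : ∀ Δ : ℝ, {i : ι | E i ≤ Δ}.Finite) (E₀ : ℝ) (hE₀ : 0 ≤ E₀)
    (ψseq : ℕ → H) (hnorm : ∀ N, ‖ψseq N‖ ≤ 1)
    (henergy : ∀ N, ∀ F : Finset ι, ∑ i ∈ F, E i * ‖⟪e i, ψseq N⟫_ℂ‖ ^ 2 ≤ E₀)
    (c : ι → ℂ)
    (hconv : ∀ i, Tendsto (fun N => ⟪e i, ψseq N⟫_ℂ) atTop (nhds (c i))) :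
    ∃ ψ : H, (∀ i, ⟪e i, ψ⟫_ℂ = c i) ∧
      Tendsto (fun N => ‖ψseq N - ψ‖) atTop (nhds 0) := by
  classical
  have h2 : (0 : ℝ) < (2 : ℝ≥0∞).toReal := by norm_num
  set a : ℕ → lp (fun _ : ι => ℂ) 2 := fun N => e.repr (ψseq N) with ha
  have ha_apply : ∀ N i, a N i = ⟪e i, ψseq N⟫_ℂ := fun N i =>
    e.repr_apply_apply (ψseq N) i
  -- energy bound in terms of a
  have haE : ∀ N (G : Finset ι), ∑ i ∈ G, E i * ‖a N i‖ ^ 2 ≤ E₀ := by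
    intro N G
    simpa only [ha_apply] using henergy N G
  -- finite sums of ‖a N i‖² ≤ 1
  have hsumF : ∀ N (F : Finset ι), ∑ i ∈ F, ‖a N i‖ ^ 2 ≤ 1 := by
    intro N F
    have h1 := lp.sum_rpow_le_norm_rpow h2 (a N) F
    have h2' : ‖a N‖ ^ ((2 : ℝ≥0∞).toReal) ≤ 1 := by
      apply Real.rpow_le_one (norm_nonneg _) _ (le_of_lt h2)
      have : ‖a N‖ = ‖ψseq N‖ := e.repr.norm_map (ψseq N)
      rw [this]; exact hnorm N
    calc ∑ i ∈ F, ‖a N i‖ ^ 2 = ∑ i ∈ F, ‖a N i‖ ^ ((2 : ℝ≥0∞).toReal) :=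
          Finset.sum_congr rfl fun i _ => (rpow_two_eq (norm_nonneg _)).symm
      _ ≤ 1 := h1.trans h2'
  -- pointwise convergence of squared norms
  have hconv' : ∀ i, Tendsto (fun N => ‖a N i - c i‖ ^ 2) atTop (nhds 0) := by
    intro i
    have : Tendsto (fun N => a N i - c i) atTop (nhds 0) := by
      simpa [ha_apply] using (hconv i).sub (tendsto_const_nhds (x := c i))
    simpa using (this.norm.pow 2)
  have hconvsq : ∀ i, Tendsto (fun N => ‖a N i‖ ^ 2) atTop (nhds (‖c i‖ ^ 2)) := by
    intro i
    have : Tendsto (fun N => a N i) atTop (nhds (c i)) := by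
      simpa [ha_apply] using hconv i
    exact this.norm.pow 2
  -- c is in ℓ²
  have hcF : ∀ F : Finset ι, ∑ i ∈ F, ‖c i‖ ^ 2 ≤ 1 := by
    intro F
    refine le_of_tendsto (tendsto_finset_sum F fun i _ => hconvsq i) ?_
    exact Eventually.of_forall fun N => hsumF N F
  have hcE : ∀ F : Finset ι, ∑ i ∈ F, E i * ‖c i‖ ^ 2 ≤ E₀ := by
    intro F
    refine le_of_tendsto (tendsto_finset_sum F fun i _ =>
      (tendsto_const_nhds (x := E i)).mul (hconvsq i)) ?_
    exact Eventually.of_forall fun N => haE N F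
  have hmem : Memℓp c 2 := by
    apply memℓp_gen' (C := 1)
    intro s
    calc ∑ i ∈ s, ‖c i‖ ^ ((2 : ℝ≥0∞).toReal) = ∑ i ∈ s, ‖c i‖ ^ 2 :=
          Finset.sum_congr rfl fun i _ => rpow_two_eq (norm_nonneg _)
      _ ≤ 1 := hcF s
  set g : lp (fun _ : ι => ℂ) 2 := ⟨c, hmem⟩ with hg
  have hg_apply : ∀ i, g i = c i := fun i => rfl
  refine ⟨e.repr.symm g, fun i => ?_, ?_⟩
  · rw [← e.repr_apply_apply, e.repr.apply_symm_apply]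
  -- summability facts
  have hsummc : Summable fun i => ‖c i‖ ^ 2 := by
    refine (hmem.summable h2).congr fun i => rpow_two_eq (norm_nonneg _)
  have hsumma : ∀ N, Summable fun i => ‖a N i‖ ^ 2 := fun N =>
    ((lp.memℓp (a N)).summable h2).congr fun i => rpow_two_eq (norm_nonneg _)
  have hsummd : ∀ N, Summable fun i => ‖a N i - c i‖ ^ 2 := by
    intro N
    refine ((lp.memℓp (a N - g)).summable h2).congr fun i => ?_
    rw [rpow_two_eq (norm_nonneg _)]
    congr 2
  have hnormeq : ∀ N, ‖ψseq N - e.repr.symm g‖ ^ 2 = ∑' i, ‖a N i - c i‖ ^ 2 := by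
    intro N
    have h1 : ‖ψseq N - e.repr.symm g‖ = ‖a N - g‖ := by
      rw [← e.repr.norm_map, map_sub, e.repr.apply_symm_apply]
    have h2'' := lp.norm_rpow_eq_tsum h2 (a N - g)
    rw [h1, ← rpow_two_eq (norm_nonneg _), h2'']
    refine tsum_congr fun i => ?_
    rw [rpow_two_eq (norm_nonneg _)]
    congr 2
  -- the main convergence
  rw [Metric.tendsto_atTop]
  intro ε hε
  set Δ : ℝ := 8 * E₀ / ε ^ 2 + 1 with hΔdef
  have hΔ : 0 < Δ := by positivity
  set F : Finset ι := (hsub Δ).toFinset with hFdef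
  have hF : ∀ i, i ∉ F → Δ ≤ E i := by
    intro i hi
    rw [hFdef, Set.Finite.mem_toFinset] at hi
    exact le_of_lt (lt_of_not_ge hi)
  have htail_a : ∀ N, ∑' i : ((↑F : Set ι)ᶜ : Set ι), ‖a N (i : ι)‖ ^ 2 ≤ E₀ / Δ :=
    fun N => tail_bound E E₀ Δ hΔ F hF _ (hsumma N) (haE N)
  have htail_c : ∑' i : ((↑F : Set ι)ᶜ : Set ι), ‖c (i : ι)‖ ^ 2 ≤ E₀ / Δ :=
    tail_bound E E₀ Δ hΔ F hF _ hsummc hcE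
  have htail_d : ∀ N, ∑' i : ((↑F : Set ι)ᶜ : Set ι), ‖a N (i : ι) - c (i : ι)‖ ^ 2
      ≤ 4 * (E₀ / Δ) := by
    intro N
    have hA : Summable fun i : ((↑F : Set ι)ᶜ : Set ι) => ‖a N (i : ι)‖ ^ 2 :=
      (hsumma N).subtype _
    have hC : Summable fun i : ((↑F : Set ι)ᶜ : Set ι) => ‖c (i : ι)‖ ^ 2 :=
      hsummc.subtype _
    have hD : Summable fun i : ((↑F : Set ι)ᶜ : Set ι) => ‖a N (i : ι) - c (i : ι)‖ ^ 2 :=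
      (hsummd N).subtype _
    have hpt : ∀ i : ((↑F : Set ι)ᶜ : Set ι),
        ‖a N (i : ι) - c (i : ι)‖ ^ 2 ≤ 2 * ‖a N (i : ι)‖ ^ 2 + 2 * ‖c (i : ι)‖ ^ 2 := by
      intro i
      have h1 : ‖a N (i : ι) - c (i : ι)‖ ≤ ‖a N (i : ι)‖ + ‖c (i : ι)‖ :=
        norm_sub_le _ _
      nlinarith [norm_nonneg (a N (i : ι) - c (i : ι)), norm_nonneg (a N (i : ι)),
        norm_nonneg (c (i : ι)), sq_nonneg (‖a N (i : ι)‖ - ‖c (i : ι)‖)]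
    calc ∑' i : ((↑F : Set ι)ᶜ : Set ι), ‖a N (i : ι) - c (i : ι)‖ ^ 2
        ≤ ∑' i : ((↑F : Set ι)ᶜ : Set ι),
            (2 * ‖a N (i : ι)‖ ^ 2 + 2 * ‖c (i : ι)‖ ^ 2) := by
          exact Summable.tsum_le_tsum hpt hD ((hA.mul_left 2).add (hC.mul_left 2))
      _ = 2 * (∑' i : ((↑F : Set ι)ᶜ : Set ι), ‖a N (i : ι)‖ ^ 2)
            + 2 * (∑' i : ((↑F : Set ι)ᶜ : Set ι), ‖c (i : ι)‖ ^ 2) := by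
          rw [Summable.tsum_add (hA.mul_left 2) (hC.mul_left 2), tsum_mul_left, tsum_mul_left]
      _ ≤ 2 * (E₀ / Δ) + 2 * (E₀ / Δ) := by
          exact add_le_add (mul_le_mul_of_nonneg_left (htail_a N) (by norm_num))
            (mul_le_mul_of_nonneg_left htail_c (by norm_num))
      _ = 4 * (E₀ / Δ) := by ring
  have htailε : 4 * (E₀ / Δ) < ε ^ 2 / 2 := by
    rw [mul_div_assoc', div_lt_div_iff₀ hΔ two_pos]
    have hΔeq : ε ^ 2 * Δ = 8 * E₀ + ε ^ 2 := by
      rw [hΔdef]; field_simp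
    nlinarith [sq_nonneg ε, hε]
  -- head convergence
  have hhead : Tendsto (fun N => ∑ i ∈ F, ‖a N i - c i‖ ^ 2) atTop (nhds 0) := by
    have := tendsto_finset_sum F fun i _ => hconv' i
    simpa using this
  have hev := hhead.eventually_lt_const (show (0 : ℝ) < ε ^ 2 / 2 by positivity)
  obtain ⟨N₀, hN₀⟩ := eventually_atTop.1 hev
  refine ⟨N₀, fun n hn => ?_⟩
  have hsq : ‖ψseq n - e.repr.symm g‖ ^ 2 < ε ^ 2 := by
    rw [hnormeq n, ← Summable.sum_add_tsum_compl (s := F) (hsummd n)]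
    have := hN₀ n hn
    have := htail_d n
    calc (∑ i ∈ F, ‖a n i - c i‖ ^ 2)
          + ∑' i : ((↑F : Set ι)ᶜ : Set ι), ‖a n (i : ι) - c (i : ι)‖ ^ 2
        < ε ^ 2 / 2 + ε ^ 2 / 2 := by
          apply add_lt_add_of_lt_of_le (hN₀ n hn) ((htail_d n).trans (le_of_lt htailε))
      _ = ε ^ 2 := by ring
  have : ‖ψseq n - e.repr.symm g‖ < ε :=
    lt_of_pow_lt_pow_left₀ 2 (le_of_lt hε) hsq
  rw [Real.dist_eq, sub_zero, abs_of_nonneg (norm_nonneg _)]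
  exact this
end

section
/- Convergent subsequence with norm limit under the energy bound (abstract form of Steps 2–4 combined): Let (ψ_N)_{N ∈ ℕ} be a sequence of vectors in H with ‖ψ_N‖ ≤ 1 for all N, satisfying the uniform energy bound: for every N and every finite set F ⊆ ι, ∑_{i ∈ F} E i · |⟪e i, ψ_N⟫|² ≤ E₀. Then there exists a strictly monotone φ : ℕ → ℕ and a vector ψ ∈ H such that ‖ψ_{φ(N)} − ψ‖ → 0 as N → ∞. -/
open Filter
open scoped InnerProductSpace BigOperators

private lemma aux_norm_sub_proj {H : Type*} [NormedAddCommGroup H]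
    [InnerProductSpace ℂ H] {ι : Type*} {v : ι → H} (hv : Orthonormal ℂ v)
    (x : H) (s : Finset ι) :
    ‖x - ∑ i ∈ s, ⟪v i, x⟫_ℂ • v i‖ ^ 2 = ‖x‖ ^ 2 - ∑ i ∈ s, ‖⟪v i, x⟫_ℂ‖ ^ 2 := by
  classical
  have h₂ :
      (∑ i ∈ s, ∑ j ∈ s, ⟪v i, x⟫_ℂ * ⟪x, v j⟫_ℂ * ⟪v j, v i⟫_ℂ)
        = (∑ k ∈ s, ⟪v k, x⟫_ℂ * ⟪x, v k⟫_ℂ : ℂ) := hv.inner_left_right_finset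
  have h₃ : ∀ z : ℂ, Complex.re (z * (starRingEnd ℂ) z) = ‖z‖ ^ 2 := by
    intro z
    rw [Complex.mul_conj]
    simp [Complex.normSq_eq_norm_sq]
    norm_cast
  rw [@norm_sub_sq ℂ, sub_add]
  simp only [@norm_sq_eq_re_inner ℂ, inner_sum, sum_inner]
  simp only [inner_smul_right, two_mul, inner_smul_left, inner_conj_symm, ← mul_assoc, h₂,
    add_sub_cancel_right, sub_right_inj]
  simp only [map_sum, ← inner_conj_symm x, ← h₃]
  refine Finset.sum_congr rfl fun i _ => ?_
  rw [RCLike.inner_apply]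

private lemma aux_parseval {H : Type*} [NormedAddCommGroup H]
    [InnerProductSpace ℂ H] [CompleteSpace H] {ι : Type*}
    (e : HilbertBasis ι ℂ H) (x : H) :
    HasSum (fun i => ‖⟪e i, x⟫_ℂ‖ ^ 2) (‖x‖ ^ 2) := by
  have h := (e.hasSum_inner_mul_inner x x).mapL Complex.reCLM
  have hx : Complex.reCLM ⟪x, x⟫_ℂ = ‖x‖ ^ 2 := by
    simp only [Complex.reCLM_apply]
    rw [← RCLike.re_to_complex]
    exact inner_self_eq_norm_sq x
  rw [hx] at h
  have hfun : ∀ i, Complex.reCLM (⟪x, e i⟫_ℂ * ⟪e i, x⟫_ℂ) = ‖⟪e i, x⟫_ℂ‖ ^ 2 := by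
    intro i
    rw [← inner_conj_symm x (e i), Complex.reCLM_apply, mul_comm, Complex.mul_conj]
    simp [Complex.normSq_eq_norm_sq]
    norm_cast
  have h2 : (fun i => ‖⟪e i, x⟫_ℂ‖ ^ 2)
      = fun b => Complex.reCLM (⟪x, e b⟫_ℂ * ⟪e b, x⟫_ℂ) :=
    funext fun i => (hfun i).symm
  rw [h2]
  exact h

/-- Convergent subsequence with norm limit under the energy bound: a sequence
of vectors of norm at most one with a uniform energy bound (with respect to an
energy function with finite sublevel sets) admits a subsequence converging in
norm to some vector. -/
theorem energy_bound_convergent_subsequence {ι : Type*} {H : Type*}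
    [NormedAddCommGroup H] [InnerProductSpace ℂ H] [CompleteSpace H]
    (e : HilbertBasis ι ℂ H) (E : ι → ℝ) (hE : ∀ i, 0 ≤ E i)
    (hsub : ∀ Δ : ℝ, {i : ι | E i ≤ Δ}.Finite) (E₀ : ℝ) (hE₀ : 0 ≤ E₀)
    (ψseq : ℕ → H) (hnorm : ∀ N, ‖ψseq N‖ ≤ 1)
    (henergy : ∀ N, ∀ F : Finset ι, ∑ i ∈ F, E i * ‖⟪e i, ψseq N⟫_ℂ‖ ^ 2 ≤ E₀) :
    ∃ φ : ℕ → ℕ, StrictMono φ ∧ ∃ ψ : H,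
      Tendsto (fun N => ‖ψseq (φ N) - ψ‖) atTop (nhds 0) := by
  classical
  set K : Set H := {ψ | ‖ψ‖ ≤ 1 ∧ ∀ F : Finset ι, ∑ i ∈ F, E i * ‖⟪e i, ψ⟫_ℂ‖ ^ 2 ≤ E₀}
    with hK_def
  -- K is closed
  have hKclosed : IsClosed K := by
    have h1 : IsClosed {ψ : H | ‖ψ‖ ≤ 1} := isClosed_le continuous_norm continuous_const
    have h2 : IsClosed {ψ : H | ∀ F : Finset ι, ∑ i ∈ F, E i * ‖⟪e i, ψ⟫_ℂ‖ ^ 2 ≤ E₀} := by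
      have : {ψ : H | ∀ F : Finset ι, ∑ i ∈ F, E i * ‖⟪e i, ψ⟫_ℂ‖ ^ 2 ≤ E₀}
          = ⋂ F : Finset ι, {ψ : H | ∑ i ∈ F, E i * ‖⟪e i, ψ⟫_ℂ‖ ^ 2 ≤ E₀} := by
        ext ψ; simp
      rw [this]
      refine isClosed_iInter fun F => isClosed_le ?_ continuous_const
      refine continuous_finset_sum _ fun i _ => Continuous.mul continuous_const ?_
      exact ((innerSL ℂ (e i)).continuous.norm).pow 2
    exact h1.inter h2
  -- K is totally bounded
  have hKtb : TotallyBounded K := by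
    rw [Metric.totallyBounded_iff]
    intro ε hε
    set Δ : ℝ := 4 * E₀ / ε ^ 2 + 1 with hΔdef
    have hΔpos : 0 < Δ := by positivity
    have hΔ : E₀ / Δ < (ε / 2) ^ 2 := by
      rw [div_lt_iff₀ hΔpos, hΔdef]
      have : (ε / 2) ^ 2 * (4 * E₀ / ε ^ 2) = E₀ := by
        field_simp; ring
      nlinarith [sq_nonneg ε, sq_nonneg (ε/2), mul_pos (by positivity : (0:ℝ) < (ε/2)^2) hΔpos]
    set F : Finset ι := (hsub Δ).toFinset with hFdef
    have hF_mem : ∀ i : ι, i ∈ F ↔ E i ≤ Δ := by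
      intro i; simp [hFdef, Set.Finite.mem_toFinset]
    -- the finite-rank "projection"
    set T : H → H := fun ψ => ∑ i ∈ F, ⟪e i, ψ⟫_ℂ • e i with hTdef
    -- tail estimate
    have htail : ∀ ψ ∈ K, ‖ψ - T ψ‖ < ε / 2 := by
      rintro ψ ⟨hψ1, hψ2⟩
      have hsummable : Summable (fun i => ‖⟪e i, ψ⟫_ℂ‖ ^ 2) := (aux_parseval e ψ).summable
      have hpars : (∑' i, ‖⟪e i, ψ⟫_ℂ‖ ^ 2) = ‖ψ‖ ^ 2 := (aux_parseval e ψ).tsum_eq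
      have hsq : ‖ψ - T ψ‖ ^ 2 = ‖ψ‖ ^ 2 - ∑ i ∈ F, ‖⟪e i, ψ⟫_ℂ‖ ^ 2 :=
        aux_norm_sub_proj e.orthonormal ψ F
      have hsplit : ∑ i ∈ F, ‖⟪e i, ψ⟫_ℂ‖ ^ 2
          + ∑' i : ((F : Set ι)ᶜ : Set ι), ‖⟪e (i : ι), ψ⟫_ℂ‖ ^ 2 = ‖ψ‖ ^ 2 := by
        rw [← hpars, ← Summable.tsum_add_tsum_compl (s := (F : Set ι))
          ((hsummable.subtype _)) ((hsummable.subtype _)),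
          Finset.tsum_subtype' F (fun i => ‖⟪e i, ψ⟫_ℂ‖ ^ 2)]
      have htail_le : (∑' i : ((F : Set ι)ᶜ : Set ι), ‖⟪e (i : ι), ψ⟫_ℂ‖ ^ 2) ≤ E₀ / Δ := by
        refine Summable.tsum_le_of_sum_le (hsummable.subtype _) ?_
        intro s
        have hmap : ∑ i ∈ s, ‖⟪e (i : ι), ψ⟫_ℂ‖ ^ 2
            = ∑ i ∈ s.image Subtype.val, ‖⟪e i, ψ⟫_ℂ‖ ^ 2 := by
          rw [Finset.sum_image (by intro a _ b _ h; exact Subtype.val_injective h)]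
        rw [hmap]
        set G := s.image Subtype.val with hG
        have hGnotF : ∀ i ∈ G, Δ < E i := by
          intro i hi
          rw [hG, Finset.mem_image] at hi
          obtain ⟨a, _, rfl⟩ := hi
          have ha : (a : ι) ∉ F := a.2
          by_contra hcon
          exact ha ((hF_mem _).mpr (by linarith [not_lt.mp hcon]))
        have step : ∑ i ∈ G, ‖⟪e i, ψ⟫_ℂ‖ ^ 2 ≤ (∑ i ∈ G, E i * ‖⟪e i, ψ⟫_ℂ‖ ^ 2) / Δ := by
          rw [Finset.sum_div]
          refine Finset.sum_le_sum fun i hi => ?_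
          rw [le_div_iff₀ hΔpos]
          have h1 : Δ ≤ E i := le_of_lt (hGnotF i hi)
          nlinarith [sq_nonneg ‖⟪e i, ψ⟫_ℂ‖, norm_nonneg ⟪e i, ψ⟫_ℂ]
        refine step.trans ?_
        gcongr
        exact hψ2 G
      have hlt : ‖ψ - T ψ‖ ^ 2 < (ε / 2) ^ 2 := by
        have : ‖ψ - T ψ‖ ^ 2 ≤ E₀ / Δ := by
          rw [hsq, ← hsplit]
          linarith [htail_le]
        linarith
      have := lt_of_pow_lt_pow_left₀ 2 (by positivity : (0:ℝ) ≤ ε / 2) hlt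
      rwa [] at this
    -- compact finite-dimensional set containing T '' K
    set Φ : EuclideanSpace ℂ F → H := fun c => ∑ i : F, c i • e (i : ι) with hΦdef
    have hΦcont : Continuous Φ := by
      refine continuous_finset_sum _ fun i _ => ?_
      exact (EuclideanSpace.proj i).continuous.smul continuous_const
    have hC : IsCompact (Φ '' Metric.closedBall 0 1) :=
      (isCompact_closedBall (0 : EuclideanSpace ℂ F) 1).image hΦcont
    obtain ⟨t, htfin, htcover⟩ := (Metric.totallyBounded_iff.mp hC.totallyBounded) (ε / 2)
      (by positivity)
    refine ⟨t, htfin, ?_⟩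
    intro ψ hψ
    have hTmem : T ψ ∈ Φ '' Metric.closedBall 0 1 := by
      refine ⟨WithLp.toLp 2 (fun i => ⟪e (i : ι), ψ⟫_ℂ), ?_, ?_⟩
      · rw [Metric.mem_closedBall, dist_zero_right]
        have hbessel : ∑ i : F, ‖⟪e (i : ι), ψ⟫_ℂ‖ ^ 2 ≤ ‖ψ‖ ^ 2 := by
          rw [Finset.sum_coe_sort F (fun i => ‖⟪e i, ψ⟫_ℂ‖ ^ 2)]
          exact e.orthonormal.sum_inner_products_le ψ
        have h1 : ‖ψ‖ ^ 2 ≤ 1 := by nlinarith [hψ.1, norm_nonneg ψ]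
        rw [EuclideanSpace.norm_eq]
        refine Real.sqrt_le_one.mpr ?_
        calc ∑ i : F, ‖⟪e (i : ι), ψ⟫_ℂ‖ ^ 2 ≤ ‖ψ‖ ^ 2 := hbessel
          _ ≤ 1 := h1
      · rw [hΦdef, hTdef]
        simp only
        exact Finset.sum_coe_sort F (fun i => ⟪e i, ψ⟫_ℂ • e i)
    obtain ⟨y, hy⟩ := Set.mem_iUnion₂.mp (htcover hTmem)
    obtain ⟨hyt, hyball⟩ := hy
    refine Set.mem_iUnion₂.mpr ⟨y, hyt, ?_⟩
    rw [Metric.mem_ball]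
    calc dist ψ y ≤ dist ψ (T ψ) + dist (T ψ) y := dist_triangle _ _ _
      _ < ε / 2 + ε / 2 := by
          refine add_lt_add_of_lt_of_lt ?_ (Metric.mem_ball.mp hyball)
          rw [dist_eq_norm]; exact htail ψ hψ
      _ = ε := by ring
  have hKcompact : IsCompact K := TotallyBounded.isCompact_of_isClosed hKtb hKclosed
  have hmem : ∀ N, ψseq N ∈ K := fun N => ⟨hnorm N, henergy N⟩
  obtain ⟨ψ, _, φ, hφ, hconv⟩ := hKcompact.tendsto_subseq hmem
  refine ⟨φ, hφ, ψ, ?_⟩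
  have := tendsto_iff_norm_sub_tendsto_zero.mp hconv
  simpa using this
end
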